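/- Let λ, κ ∈ K, (A, μ, α, β) a BiHom-commutative BiHom-associative algebra and 𝔇 a λ-(αβ,αβ)-derivation such that α, β, 𝔇 pairwise commute. Define a * b := αβ(a)𝔇(b) + κ αβ(a)αβ(b). Then (A, *, α²β, αβ²) is a BiHom-pre-Lie algebra and a BiHom-Novikov algebra. -/
import Mathlib


/-- (Left) BiHom-pre-Lie algebra `(A, c, α, β)`. -/
def BHPreLie {K A : Type*} [Field K] [AddCommGroup A] [Module K A]
    (c : A →ₗ[K] A →ₗ[K] A) (α β : A →ₗ[K] A) : Prop :=
  (∀ a, α (β a) = β (α a)) ∧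
  (∀ a b, α (c a b) = c (α a) (α b)) ∧
  (∀ a b, β (c a b) = c (β a) (β b)) ∧
  (∀ a b x, c (α (β a)) (c (α b) x) - c (c (β a) (α b)) (β x) =
    c (α (β b)) (c (α a) x) - c (c (β b) (α a)) (β x))

/-- BiHom-Novikov algebra: BiHom-pre-Lie plus `(a*β(b))*αβ(c) = (a*β(c))*αβ(b)`. -/
def BHNovikov {K A : Type*} [Field K] [AddCommGroup A] [Module K A]
    (c : A →ₗ[K] A →ₗ[K] A) (α β : A →ₗ[K] A) : Prop :=
  BHPreLie c α β ∧
  (∀ a b x, c (c a (β b)) (α (β x)) = c (c a (β x)) (α (β b)))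

/-- BiHom-pre-Lie bimodule over a BiHom-pre-Lie algebra `(A, c, α, β)`. -/
def BHPreLieBimod {K A M : Type*} [Field K] [AddCommGroup A] [Module K A]
    [AddCommGroup M] [Module K M]
    (c : A →ₗ[K] A →ₗ[K] A) (α β : A →ₗ[K] A)
    (cl : A →ₗ[K] M →ₗ[K] M) (cr : M →ₗ[K] A →ₗ[K] M)
    (αM βM : M →ₗ[K] M) : Prop :=
  (∀ m, αM (βM m) = βM (αM m)) ∧
  (∀ a m, αM (cl a m) = cl (α a) (αM m)) ∧
  (∀ m a, αM (cr m a) = cr (αM m) (α a)) ∧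
  (∀ a m, βM (cl a m) = cl (β a) (βM m)) ∧
  (∀ m a, βM (cr m a) = cr (βM m) (β a)) ∧
  (∀ a b m, cl (α (β a)) (cl (α b) m) - cl (c (β a) (α b)) (βM m) =
    cl (α (β b)) (cl (α a) m) - cl (c (β b) (α a)) (βM m)) ∧
  (∀ a m x, cl (α (β a)) (cr (αM m) x) - cr (cl (β a) (αM m)) (β x) =
    cr (αM (βM m)) (c (α a) x) - cr (cr (βM m) (α a)) (β x))

/-- for a BiHom-commutative BiHom-associative algebra `(A, μ, α, β)` and a
`lam`-`(αβ,αβ)`-derivation `D` (with `α, β, D` pairwise commuting), the product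
`a * b = αβ(a)D(b) + κ αβ(a)αβ(b)` makes `(A, *, α²β, αβ²)` a BiHom-pre-Lie algebra
and a BiHom-Novikov algebra. -/
theorem stmt14 (K A : Type*) [Field K] [AddCommGroup A] [Module K A] (lam κ : K)
    (μ : A →ₗ[K] A →ₗ[K] A) (α β D : A →ₗ[K] A)
    (hαmul : ∀ a b, α (μ a b) = μ (α a) (α b))
    (hβmul : ∀ a b, β (μ a b) = μ (β a) (β b))
    (hassoc : ∀ a b c, μ (α a) (μ b c) = μ (μ a b) (β c))
    (hcommut : ∀ a b, μ (β a) (α b) = μ (β b) (α a))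
    (hD : ∀ a b, D (μ a b) =
      μ (α (β a)) (D b) + μ (D a) (α (β b)) + lam • μ (α (β a)) (α (β b)))
    (hpair : ∀ f ∈ ([α, β, D] : List (A →ₗ[K] A)),
      ∀ g ∈ ([α, β, D] : List (A →ₗ[K] A)), ∀ a, f (g a) = g (f a))
    (star : A →ₗ[K] A →ₗ[K] A)
    (hstar : ∀ a b, star a b = μ (α (β a)) (D b) + κ • μ (α (β a)) (α (β b))) :
    BHPreLie star (α ∘ₗ α ∘ₗ β) (α ∘ₗ β ∘ₗ β) ∧
    BHNovikov star (α ∘ₗ α ∘ₗ β) (α ∘ₗ β ∘ₗ β) := by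
  have hβα : ∀ a, β (α a) = α (β a) := hpair β (by simp) α (by simp)
  have hDα : ∀ a, D (α a) = α (D a) := hpair D (by simp) α (by simp)
  have hDβ : ∀ a, D (β a) = β (D a) := hpair D (by simp) β (by simp)
  obtain ⟨E, hEap⟩ : ∃ E : A →ₗ[K] A, ∀ a, E a = D a + κ • α (β a) :=
    ⟨D + κ • (α ∘ₗ β), fun a => by simp⟩
  have hEα : ∀ a, E (α a) = α (E a) := by intro a; simp [hEap, hDα, hβα]
  have hEβ : ∀ a, E (β a) = β (E a) := by intro a; simp [hEap, hDβ, hβα]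
  have hEμ : ∀ a b, E (μ a b) = μ (α (β a)) (E b) + μ (E a) (α (β b))
      + (lam - κ) • μ (α (β a)) (α (β b)) := by
    intro a b
    simp only [hEap, hD, hαmul, hβmul, map_add, map_smul, LinearMap.add_apply,
      LinearMap.smul_apply]
    module
  have hstarE : ∀ a b, star a b = μ (α (β a)) (E b) := by
    intro a b; simp [hstar, hEap]
  have hP : ∀ u v, μ (α (α (α (β (β (β (β u))))))) (α (α (α (α (β (β (β v))))))) =
      μ (α (α (α (β (β (β (β v))))))) (α (α (α (α (β (β (β u))))))) := by
    intro u v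
    simpa [hβα] using hcommut (α (α (α (β (β (β u)))))) (α (α (α (β (β (β v))))))
  have key : ∀ a b x,
      star (α (α (β (α (β (β a)))))) (star (α (α (β b))) x)
      - star (star (α (β (β a))) (α (α (β b)))) (α (β (β x)))
      = μ (μ (α (α (α (β (β (β (β a))))))) (α (α (α (α (β (β (β b)))))))) (β (E (E x)))
      + (lam - κ) • μ (μ (α (α (α (β (β (β (β a)))))))
          (α (α (α (α (β (β (β b)))))))) (α (β (β (E x)))) := by
    intro a b x
    simp only [hstarE, hEμ, hαmul, hβmul, map_add, map_smul, LinearMap.add_apply,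
      LinearMap.smul_apply, hβα, hEα, hEβ]
    rw [hassoc (α (α (α (β (β (β (β a))))))) (α (α (α (α (β (β (β b))))))) (E (E x)),
        hassoc (α (α (α (β (β (β (β a))))))) (α (α (α (β (β (E b)))))) (α (β (E x))),
        hassoc (α (α (α (β (β (β (β a))))))) (α (α (α (α (β (β (β b))))))) (α (β (E x)))]
    simp only [hβα]
    abel
  have hpre : BHPreLie star (α ∘ₗ α ∘ₗ β) (α ∘ₗ β ∘ₗ β) := by
    refine ⟨?_, ?_, ?_, ?_⟩
    · intro a; simp [hβα]
    · intro a b; simp [hstarE, hαmul, hβmul, hβα, hEα, hEβ]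
    · intro a b; simp [hstarE, hαmul, hβmul, hβα, hEα, hEβ]
    · intro a b x
      simp only [LinearMap.comp_apply]
      rw [key a b x, key b a x, hP a b]
  have nov : ∀ a b x, star (star a (α (β (β b)))) (α (α (β (α (β (β x)))))) =
      μ (α (α (α (β (β a))))) (μ (α (α (β (β (β (E b))))))
        (α (α (α (β (β (E x))))))) := by
    intro a b x
    simp only [hstarE, hαmul, hβmul, hβα, hEα, hEβ]
    have h3 : (α (α (α (β (β (β (E x))))))) = β (α (α (α (β (β (E x)))))) := by
      simp [hβα]
    rw [h3, ← hassoc]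
  have hsym : ∀ b x, μ (α (α (β (β (β (E b)))))) (α (α (α (β (β (E x)))))) =
      μ (α (α (β (β (β (E x)))))) (α (α (α (β (β (E b)))))) := by
    intro b x
    simpa [hβα] using hcommut (α (α (β (β (E b))))) (α (α (β (β (E x)))))
  refine ⟨hpre, hpre, ?_⟩
  intro a b x
  simp only [LinearMap.comp_apply]
  rw [nov a b x, nov a x b, hsym b x]
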